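/- arXiv:1205.2163 — 6 statements merged into one kernel-verified Lean document; each statement's English description precedes it below -/
import Mathlib

section
/- Let ψ : A⊗B → B⊗A be a weak distributive law between k-algebras A and B, and let φ : B⊗A → A⊗B be a weak inverse of ψ. Then ψ∘φ is an idempotent k-linear endomorphism of B⊗A; for all x, y in the image of ψ∘φ the element (μ_B⊗μ_A)((id_B⊗ψ⊗id_A)(x⊗y)) again lies in the image of ψ∘φ; and this multiplication makes the image of ψ∘φ an associative unital k-algebra with two-sided unit ψ(1_A⊗1_B), which equals (ψ∘φ)(1_B⊗1_A). -/
open TensorProduct LinearMap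

section WDL

variable (R : Type*) [CommRing R]

section AlgDefs

variable {A B : Type*} [Ring A] [Ring B] [Algebra R A] [Algebra R B]

/-- Weak distributive law axioms, stated pointwise on pure tensors. -/
def IsWeakDistLaw (ψ : A ⊗[R] B →ₗ[R] B ⊗[R] A) : Prop :=
  (∀ (a a' : A) (b : B), ψ ((a * a') ⊗ₜ[R] b) =
      lTensor B (mul' R A) ((TensorProduct.assoc R B A A)
        (rTensor A ψ ((TensorProduct.assoc R A B A).symm (a ⊗ₜ[R] ψ (a' ⊗ₜ[R] b)))))) ∧
  (∀ (a : A) (b b' : B), ψ (a ⊗ₜ[R] (b * b')) =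
      rTensor A (mul' R B) ((TensorProduct.assoc R B B A).symm
        (lTensor B ψ ((TensorProduct.assoc R B A B) (ψ (a ⊗ₜ[R] b) ⊗ₜ[R] b'))))) ∧
  (∀ b : B, ψ ((1 : A) ⊗ₜ[R] b) =
      rTensor A (mul' R B) ((TensorProduct.assoc R B B A).symm
        (b ⊗ₜ[R] ψ ((1 : A) ⊗ₜ[R] (1 : B))))) ∧
  (∀ a : A, ψ (a ⊗ₜ[R] (1 : B)) =
      lTensor B (mul' R A) ((TensorProduct.assoc R B A A)
        (ψ ((1 : A) ⊗ₜ[R] (1 : B)) ⊗ₜ[R] a)))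

/-- (Strict) distributive law axioms, stated pointwise on pure tensors. -/
def IsDistLaw (ψ : A ⊗[R] B →ₗ[R] B ⊗[R] A) : Prop :=
  (∀ (a a' : A) (b : B), ψ ((a * a') ⊗ₜ[R] b) =
      lTensor B (mul' R A) ((TensorProduct.assoc R B A A)
        (rTensor A ψ ((TensorProduct.assoc R A B A).symm (a ⊗ₜ[R] ψ (a' ⊗ₜ[R] b)))))) ∧
  (∀ (a : A) (b b' : B), ψ (a ⊗ₜ[R] (b * b')) =
      rTensor A (mul' R B) ((TensorProduct.assoc R B B A).symm
        (lTensor B ψ ((TensorProduct.assoc R B A B) (ψ (a ⊗ₜ[R] b) ⊗ₜ[R] b'))))) ∧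
  (∀ b : B, ψ ((1 : A) ⊗ₜ[R] b) = b ⊗ₜ[R] (1 : A)) ∧
  (∀ a : A, ψ (a ⊗ₜ[R] (1 : B)) = (1 : B) ⊗ₜ[R] a)

/-- `φ` is a weak inverse of `ψ`. -/
def IsWeakInverse (ψ : A ⊗[R] B →ₗ[R] B ⊗[R] A) (φ : B ⊗[R] A →ₗ[R] A ⊗[R] B) : Prop :=
  (∀ (a : A) (b : B), ψ (φ (b ⊗ₜ[R] a)) =
      rTensor A (mul' R B) ((TensorProduct.assoc R B B A).symm
        (b ⊗ₜ[R] ψ (a ⊗ₜ[R] (1 : B))))) ∧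
  (∀ (a : A) (b : B), φ (ψ (a ⊗ₜ[R] b)) =
      rTensor B (mul' R A) ((TensorProduct.assoc R A A B).symm
        (a ⊗ₜ[R] φ (b ⊗ₜ[R] (1 : A)))))

/-- The weak wreath product multiplication `(μ_B ⊗ μ_A) ∘ (id_B ⊗ ψ ⊗ id_A)`. -/
noncomputable def wreathMul (ψ : A ⊗[R] B →ₗ[R] B ⊗[R] A) :
    (B ⊗[R] A) ⊗[R] (B ⊗[R] A) →ₗ[R] B ⊗[R] A :=
  TensorProduct.map (mul' R B) (mul' R A)
    ∘ₗ (TensorProduct.assoc R B B (A ⊗[R] A)).symm.toLinearMap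
    ∘ₗ lTensor B (TensorProduct.assoc R B A A).toLinearMap
    ∘ₗ lTensor B (rTensor A ψ)
    ∘ₗ lTensor B (TensorProduct.assoc R A B A).symm.toLinearMap
    ∘ₗ (TensorProduct.assoc R B A (B ⊗[R] A)).toLinearMap

end AlgDefs

section CoalgDefs

variable {A B : Type*} [AddCommGroup A] [AddCommGroup B] [Module R A] [Module R B]

/-- Tensor product comultiplication `(id ⊗ tw ⊗ id) ∘ (dA ⊗ dB)` built from the
comultiplication data `dA`, `dB`. -/
noncomputable def comulD (dA : A →ₗ[R] A ⊗[R] A) (dB : B →ₗ[R] B ⊗[R] B) :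
    A ⊗[R] B →ₗ[R] (A ⊗[R] B) ⊗[R] (A ⊗[R] B) :=
  (TensorProduct.tensorTensorTensorComm R A A B B).toLinearMap ∘ₗ TensorProduct.map dA dB

/-- Tensor product counit `ε_A ⊗ ε_B`. -/
noncomputable def counitD (eA : A →ₗ[R] R) (eB : B →ₗ[R] R) : A ⊗[R] B →ₗ[R] R :=
  (TensorProduct.lid R R).toLinearMap ∘ₗ TensorProduct.map eA eB

/-- The weakly comonoidal conditions for a mutually weak inverse pair `(ψ, φ)`,
with respect to comultiplication/counit data on `A` and `B`. -/
def IsWeaklyComonoidalD (ψ : A ⊗[R] B →ₗ[R] B ⊗[R] A) (φ : B ⊗[R] A →ₗ[R] A ⊗[R] B)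
    (dA : A →ₗ[R] A ⊗[R] A) (dB : B →ₗ[R] B ⊗[R] B)
    (eA : A →ₗ[R] R) (eB : B →ₗ[R] R) : Prop :=
  (rTensor (B ⊗[R] A) (ψ ∘ₗ φ) ∘ₗ comulD R dB dA ∘ₗ ψ =
      TensorProduct.map ψ ψ ∘ₗ comulD R dA dB) ∧
  (lTensor (B ⊗[R] A) (ψ ∘ₗ φ) ∘ₗ comulD R dB dA ∘ₗ ψ =
      TensorProduct.map ψ ψ ∘ₗ comulD R dA dB) ∧
  (rTensor (A ⊗[R] B) (φ ∘ₗ ψ) ∘ₗ comulD R dA dB ∘ₗ φ =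
      TensorProduct.map φ φ ∘ₗ comulD R dB dA) ∧
  (lTensor (A ⊗[R] B) (φ ∘ₗ ψ) ∘ₗ comulD R dA dB ∘ₗ φ =
      TensorProduct.map φ φ ∘ₗ comulD R dB dA) ∧
  (counitD R eB eA ∘ₗ ψ = counitD R eA eB ∘ₗ φ ∘ₗ ψ)

end CoalgDefs

section ComonClass

variable {A B : Type*} [AddCommGroup A] [AddCommGroup B] [Module R A] [Module R B]
  [Coalgebra R A] [Coalgebra R B]

/-- Tensor product comultiplication on `A ⊗ B` for coalgebras `A`, `B`. -/
noncomputable def comulTP : A ⊗[R] B →ₗ[R] (A ⊗[R] B) ⊗[R] (A ⊗[R] B) :=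
  comulD R (Coalgebra.comul (R := R) (A := A)) (Coalgebra.comul (R := R) (A := B))

/-- Tensor product counit on `A ⊗ B` for coalgebras `A`, `B`. -/
noncomputable def counitTP : A ⊗[R] B →ₗ[R] R :=
  counitD R (Coalgebra.counit (R := R) (A := A)) (Coalgebra.counit (R := R) (A := B))

end ComonClass

/-- Weakly comonoidal pair with respect to given coalgebra instances. -/
def IsWeaklyComonoidal {A B : Type*} [Ring A] [Ring B] [Algebra R A] [Algebra R B]
    [Coalgebra R A] [Coalgebra R B]
    (ψ : A ⊗[R] B →ₗ[R] B ⊗[R] A) (φ : B ⊗[R] A →ₗ[R] A ⊗[R] B) : Prop :=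
  IsWeaklyComonoidalD R ψ φ (Coalgebra.comul (R := R) (A := A))
    (Coalgebra.comul (R := R) (A := B)) (Coalgebra.counit (R := R) (A := A))
    (Coalgebra.counit (R := R) (A := B))

end WDL

/-- Data of a (possibly weak) bialgebra structure on a module `M`. -/
structure WBAData (R M : Type*) [CommRing R] [AddCommGroup M] [Module R M] where
  mul : M ⊗[R] M →ₗ[R] M
  one : M
  comul : M →ₗ[R] M ⊗[R] M
  counit : M →ₗ[R] R

namespace WBAData

variable {R M : Type*} [CommRing R] [AddCommGroup M] [Module R M] (d : WBAData R M)

/-- The induced multiplication of `M ⊗ M`. -/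
noncomputable def mul2 : (M ⊗[R] M) ⊗[R] (M ⊗[R] M) →ₗ[R] M ⊗[R] M :=
  TensorProduct.map d.mul d.mul ∘ₗ (TensorProduct.tensorTensorTensorComm R M M M M).toLinearMap

/-- The induced multiplication of `(M ⊗ M) ⊗ M`. -/
noncomputable def mul3 :
    ((M ⊗[R] M) ⊗[R] M) ⊗[R] ((M ⊗[R] M) ⊗[R] M) →ₗ[R] (M ⊗[R] M) ⊗[R] M :=
  TensorProduct.map d.mul2 d.mul ∘ₗ
    (TensorProduct.tensorTensorTensorComm R (M ⊗[R] M) M (M ⊗[R] M) M).toLinearMap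

/-- Left multiplication by `a`. -/
noncomputable def lmul (a : M) : M →ₗ[R] M := d.mul ∘ₗ TensorProduct.mk R M M a

/-- Right multiplication by `c`. -/
noncomputable def rmul (c : M) : M →ₗ[R] M := d.mul ∘ₗ (TensorProduct.mk R M M).flip c

/-- Convolution product of endomorphisms. -/
noncomputable def conv (f g : M →ₗ[R] M) : M →ₗ[R] M :=
  d.mul ∘ₗ TensorProduct.map f g ∘ₗ d.comul

/-- The projection `⊓^L : a ↦ ε(1₁a)1₂`. -/
noncomputable def piL : M →ₗ[R] M :=
  (TensorProduct.lid R M).toLinearMap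
    ∘ₗ rTensor M (d.counit ∘ₗ d.mul ∘ₗ (TensorProduct.comm R M M).toLinearMap)
    ∘ₗ (TensorProduct.assoc R M M M).symm.toLinearMap
    ∘ₗ (TensorProduct.mk R M (M ⊗[R] M)).flip (d.comul d.one)

/-- The projection `⊓^R : a ↦ 1₁ε(a1₂)`. -/
noncomputable def piR : M →ₗ[R] M :=
  (TensorProduct.rid R M).toLinearMap
    ∘ₗ lTensor M (d.counit ∘ₗ d.mul ∘ₗ (TensorProduct.comm R M M).toLinearMap)
    ∘ₗ (TensorProduct.assoc R M M M).toLinearMap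
    ∘ₗ TensorProduct.mk R (M ⊗[R] M) M (d.comul d.one)

/-- The axioms of a weak bialgebra on the data `d`. -/
structure IsWeakBialgebra : Prop where
  mul_assoc : d.mul ∘ₗ rTensor M d.mul =
      d.mul ∘ₗ lTensor M d.mul ∘ₗ (TensorProduct.assoc R M M M).toLinearMap
  one_mul : ∀ x : M, d.mul (d.one ⊗ₜ[R] x) = x
  mul_one : ∀ x : M, d.mul (x ⊗ₜ[R] d.one) = x
  coassoc : (TensorProduct.assoc R M M M).toLinearMap ∘ₗ rTensor M d.comul ∘ₗ d.comul
      = lTensor M d.comul ∘ₗ d.comul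
  counit_left : ∀ x : M, (TensorProduct.lid R M) (rTensor M d.counit (d.comul x)) = x
  counit_right : ∀ x : M, (TensorProduct.rid R M) (lTensor M d.counit (d.comul x)) = x
  comul_mul : d.comul ∘ₗ d.mul = d.mul2 ∘ₗ TensorProduct.map d.comul d.comul
  delta_one_left : d.mul3 ((d.comul d.one ⊗ₜ[R] d.one) ⊗ₜ[R]
      ((TensorProduct.assoc R M M M).symm (d.one ⊗ₜ[R] d.comul d.one)))
      = rTensor M d.comul (d.comul d.one)
  delta_one_right : d.mul3 (((TensorProduct.assoc R M M M).symm
      (d.one ⊗ₜ[R] d.comul d.one)) ⊗ₜ[R] (d.comul d.one ⊗ₜ[R] d.one))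
      = rTensor M d.comul (d.comul d.one)
  counit_mul_left : ∀ a b c : M, (TensorProduct.lid R R) (TensorProduct.map
      (d.counit ∘ₗ d.lmul a) (d.counit ∘ₗ d.rmul c) (d.comul b))
      = d.counit (d.mul (d.mul (a ⊗ₜ[R] b) ⊗ₜ[R] c))
  counit_mul_right : ∀ a b c : M, (TensorProduct.lid R R) (TensorProduct.map
      (d.counit ∘ₗ d.rmul c) (d.counit ∘ₗ d.lmul a) (d.comul b))
      = d.counit (d.mul (d.mul (a ⊗ₜ[R] b) ⊗ₜ[R] c))

/-- The axioms of a (genuine) bialgebra on the data `d`. -/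
structure IsBialgebra : Prop where
  mul_assoc : d.mul ∘ₗ rTensor M d.mul =
      d.mul ∘ₗ lTensor M d.mul ∘ₗ (TensorProduct.assoc R M M M).toLinearMap
  one_mul : ∀ x : M, d.mul (d.one ⊗ₜ[R] x) = x
  mul_one : ∀ x : M, d.mul (x ⊗ₜ[R] d.one) = x
  coassoc : (TensorProduct.assoc R M M M).toLinearMap ∘ₗ rTensor M d.comul ∘ₗ d.comul
      = lTensor M d.comul ∘ₗ d.comul
  counit_left : ∀ x : M, (TensorProduct.lid R M) (rTensor M d.counit (d.comul x)) = x
  counit_right : ∀ x : M, (TensorProduct.rid R M) (lTensor M d.counit (d.comul x)) = x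
  comul_mul : d.comul ∘ₗ d.mul = d.mul2 ∘ₗ TensorProduct.map d.comul d.comul
  comul_one : d.comul d.one = d.one ⊗ₜ[R] d.one
  counit_one : d.counit d.one = 1
  counit_mul : ∀ x y : M, d.counit (d.mul (x ⊗ₜ[R] y)) = d.counit x * d.counit y

/-- `S` is an antipode for the data `d`. -/
def IsAntipode (S : M →ₗ[R] M) : Prop :=
  d.conv LinearMap.id S = d.piL ∧ d.conv S LinearMap.id = d.piR ∧
    d.conv (d.conv S LinearMap.id) S = S

end WBAData

/-- The canonical weak-bialgebra data attached to an algebra-and-coalgebra `H`. -/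
noncomputable def algWBA (R H : Type*) [CommRing R] [Ring H] [Algebra R H] [Coalgebra R H] :
    WBAData R H :=
  { mul := LinearMap.mul' R H
    one := 1
    comul := Coalgebra.comul
    counit := Coalgebra.counit }

/-!
View `B ⊗ A` as the tensor product algebra. Then the wreath product is
`(b ⊗ a) ⋆ (b' ⊗ a') = (b ⊗ 1) ψ(a ⊗ b') (1 ⊗ a')`, the unit axioms read
`ψ(1 ⊗ b) = (b ⊗ 1) e` and `ψ(a ⊗ 1) = e (1 ⊗ a)` with `e = ψ(1 ⊗ 1)`, and the weak inverse
condition reads `ψφ(b ⊗ a) = (b ⊗ 1) ψ(a ⊗ 1)`. The two multiplicativity axioms alone make `⋆`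
associative. By the weak inverse condition `x ⋆ 1 = ψφ x`, and by multiplicativity in `A` also
`x ⋆ e = ψφ x`; since `e ⋆ 1 = e`, `e` is fixed by `ψφ`. Hence
`ψφ(ψφ x) = (x ⋆ e) ⋆ e = x ⋆ (e ⋆ e) = x ⋆ e = ψφ x`, the image of `ψφ` is closed under `⋆`, and
`e` is a right unit on it; the unit axioms give `e ⋆ x = ψφ x` as well.
-/

section WreathProduct

variable {R A B : Type*} [CommRing R] [Ring A] [Ring B] [Algebra R A] [Algebra R B]

theorem rTensor_mul'_assoc_symm_tmul (b : B) (w : B ⊗[R] A) :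
    rTensor A (mul' R B) ((TensorProduct.assoc R B B A).symm (b ⊗ₜ w)) = (b ⊗ₜ 1) * w := by
  induction w using TensorProduct.induction_on with
  | zero => simp
  | tmul c x => simp
  | add u v hu hv => simp only [tmul_add, map_add, hu, hv, mul_add]

theorem lTensor_mul'_assoc_tmul (w : B ⊗[R] A) (a : A) :
    lTensor B (mul' R A) (TensorProduct.assoc R B A A (w ⊗ₜ a)) = w * (1 ⊗ₜ a) := by
  induction w using TensorProduct.induction_on with
  | zero => simp
  | tmul c x => simp
  | add u v hu hv => simp only [add_tmul, map_add, hu, hv, add_mul]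

variable (ψ : A ⊗[R] B →ₗ[R] B ⊗[R] A)

local notation:70 x:70 " ⋆ " y:71 => wreathMul R ψ (x ⊗ₜ[R] y)

theorem wreathMul_tmul_tmul (b b' : B) (a a' : A) :
    (b ⊗ₜ a) ⋆ (b' ⊗ₜ a') = (b ⊗ₜ 1) * ψ (a ⊗ₜ b') * (1 ⊗ₜ a') := by
  simp only [wreathMul, coe_comp, LinearEquiv.coe_coe, Function.comp_apply, assoc_tmul,
    lTensor_tmul, assoc_symm_tmul, rTensor_tmul]
  induction ψ (a ⊗ₜ b') using TensorProduct.induction_on with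
  | zero => simp
  | tmul c x => simp
  | add u v hu hv => simp_all [add_tmul, tmul_add, add_mul, mul_add]

theorem wreathMul_mul_left (b : B) (x y : B ⊗[R] A) :
    ((b ⊗ₜ 1) * x) ⋆ y = (b ⊗ₜ 1) * (x ⋆ y) := by
  induction x using TensorProduct.induction_on with
  | zero => simp
  | add u v hu hv => simp only [mul_add, add_tmul, map_add, hu, hv]
  | tmul c x =>
    induction y using TensorProduct.induction_on with
    | zero => simp
    | add u v hu hv => simp only [tmul_add, map_add, hu, hv, mul_add]
    | tmul c' x' =>
      rw [Algebra.TensorProduct.tmul_mul_tmul, one_mul, wreathMul_tmul_tmul, wreathMul_tmul_tmul,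
        ← mul_one (1 : A), ← Algebra.TensorProduct.tmul_mul_tmul, mul_one]
      simp only [mul_assoc]

theorem wreathMul_mul_right (x y : B ⊗[R] A) (a : A) :
    x ⋆ (y * (1 ⊗ₜ a)) = (x ⋆ y) * (1 ⊗ₜ a) := by
  induction x using TensorProduct.induction_on with
  | zero => simp
  | add u v hu hv => simp only [add_tmul, map_add, hu, hv, add_mul]
  | tmul c x =>
    induction y using TensorProduct.induction_on with
    | zero => simp
    | add u v hu hv => simp only [add_mul, tmul_add, map_add, hu, hv]
    | tmul c' x' =>
      rw [Algebra.TensorProduct.tmul_mul_tmul, mul_one, wreathMul_tmul_tmul, wreathMul_tmul_tmul,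
        ← one_mul (1 : B), ← Algebra.TensorProduct.tmul_mul_tmul, one_mul]
      simp only [mul_assoc]

theorem tmul_wreathMul (b : B) (a : A) (y : B ⊗[R] A) :
    (b ⊗ₜ a) ⋆ y = (b ⊗ₜ 1) * ((1 ⊗ₜ a) ⋆ y) := by
  rw [← wreathMul_mul_left, Algebra.TensorProduct.tmul_mul_tmul, mul_one, one_mul]

theorem wreathMul_tmul (x : B ⊗[R] A) (b : B) (a : A) :
    x ⋆ (b ⊗ₜ a) = (x ⋆ (b ⊗ₜ 1)) * (1 ⊗ₜ a) := by
  rw [← wreathMul_mul_right, Algebra.TensorProduct.tmul_mul_tmul, mul_one, one_mul]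

variable {ψ}

theorem IsWeakDistLaw.apply_mul_tmul (hψ : IsWeakDistLaw R ψ) (a a' : A) (b : B) :
    ψ ((a * a') ⊗ₜ b) = (1 ⊗ₜ a) ⋆ ψ (a' ⊗ₜ b) := by
  rw [hψ.1]
  induction ψ (a' ⊗ₜ b) using TensorProduct.induction_on with
  | zero => simp
  | add u v hu hv => simp only [tmul_add, map_add, hu, hv]
  | tmul c x =>
    rw [assoc_symm_tmul, rTensor_tmul, lTensor_mul'_assoc_tmul, wreathMul_tmul_tmul,
      ← Algebra.TensorProduct.one_def, one_mul]

theorem IsWeakDistLaw.apply_tmul_mul (hψ : IsWeakDistLaw R ψ) (a : A) (b b' : B) :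
    ψ (a ⊗ₜ (b * b')) = ψ (a ⊗ₜ b) ⋆ (b' ⊗ₜ 1) := by
  rw [hψ.2.1]
  induction ψ (a ⊗ₜ b) using TensorProduct.induction_on with
  | zero => simp
  | add u v hu hv => simp only [add_tmul, map_add, hu, hv]
  | tmul c x =>
    rw [assoc_tmul, lTensor_tmul, rTensor_mul'_assoc_symm_tmul, wreathMul_tmul_tmul,
      ← Algebra.TensorProduct.one_def, mul_one]

theorem IsWeakDistLaw.apply_one_tmul (hψ : IsWeakDistLaw R ψ) (b : B) :
    ψ (1 ⊗ₜ b) = (b ⊗ₜ 1) * ψ (1 ⊗ₜ 1) := by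
  rw [hψ.2.2.1, rTensor_mul'_assoc_symm_tmul]

theorem IsWeakDistLaw.apply_tmul_one (hψ : IsWeakDistLaw R ψ) (a : A) :
    ψ (a ⊗ₜ 1) = ψ (1 ⊗ₜ 1) * (1 ⊗ₜ a) := by
  rw [hψ.2.2.2, lTensor_mul'_assoc_tmul]

theorem IsWeakInverse.apply_apply_tmul {φ : B ⊗[R] A →ₗ[R] A ⊗[R] B} (hinv : IsWeakInverse R ψ φ)
    (b : B) (a : A) : ψ (φ (b ⊗ₜ a)) = (b ⊗ₜ 1) * ψ (a ⊗ₜ 1) := by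
  rw [hinv.1, rTensor_mul'_assoc_symm_tmul]

theorem wreathMul_mul_one_tmul_tmul_one
    (ha : ∀ (a a' : A) (b : B), ψ ((a * a') ⊗ₜ b) = (1 ⊗ₜ a) ⋆ ψ (a' ⊗ₜ b))
    (w : B ⊗[R] A) (a : A) (b : B) : (w * (1 ⊗ₜ a)) ⋆ (b ⊗ₜ 1) = w ⋆ ψ (a ⊗ₜ b) := by
  induction w using TensorProduct.induction_on with
  | zero => simp
  | add u v hu hv => simp only [add_mul, add_tmul, map_add, hu, hv]
  | tmul c x =>
    rw [Algebra.TensorProduct.tmul_mul_tmul, mul_one, wreathMul_tmul_tmul,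
      ← Algebra.TensorProduct.one_def, mul_one, ha, tmul_wreathMul ψ c x]

theorem one_tmul_wreathMul_tmul_one_mul
    (hb : ∀ (a : A) (b b' : B), ψ (a ⊗ₜ (b * b')) = ψ (a ⊗ₜ b) ⋆ (b' ⊗ₜ 1))
    (a : A) (b : B) (w : B ⊗[R] A) : (1 ⊗ₜ a) ⋆ ((b ⊗ₜ 1) * w) = ψ (a ⊗ₜ b) ⋆ w := by
  induction w using TensorProduct.induction_on with
  | zero => simp
  | add u v hu hv => simp only [mul_add, tmul_add, map_add, hu, hv]
  | tmul c x =>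
    rw [Algebra.TensorProduct.tmul_mul_tmul, one_mul, wreathMul_tmul_tmul, hb,
      wreathMul_tmul ψ _ c x, ← Algebra.TensorProduct.one_def, one_mul]

theorem wreathMul_assoc
    (ha : ∀ (a a' : A) (b : B), ψ ((a * a') ⊗ₜ b) = (1 ⊗ₜ a) ⋆ ψ (a' ⊗ₜ b))
    (hb : ∀ (a : A) (b b' : B), ψ (a ⊗ₜ (b * b')) = ψ (a ⊗ₜ b) ⋆ (b' ⊗ₜ 1))
    (x y z : B ⊗[R] A) : (x ⋆ y) ⋆ z = x ⋆ (y ⋆ z) := by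
  induction x using TensorProduct.induction_on with
  | zero => simp
  | add u v hu hv => simp only [add_tmul, map_add, hu, hv]
  | tmul b a =>
  induction y using TensorProduct.induction_on with
  | zero => simp
  | add u v hu hv => simp only [add_tmul, tmul_add, map_add, hu, hv]
  | tmul b' a' =>
  induction z using TensorProduct.induction_on with
  | zero => simp
  | add u v hu hv => simp only [tmul_add, map_add, hu, hv]
  | tmul b'' a'' =>
  calc ((b ⊗ₜ a) ⋆ (b' ⊗ₜ a')) ⋆ (b'' ⊗ₜ a'')
      = (b ⊗ₜ 1) * ((ψ (a ⊗ₜ b') * (1 ⊗ₜ a')) ⋆ (b'' ⊗ₜ 1)) * (1 ⊗ₜ a'') := by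
        rw [wreathMul_tmul, wreathMul_tmul_tmul, mul_assoc _ (ψ _), wreathMul_mul_left]
    _ = (b ⊗ₜ 1) * (ψ (a ⊗ₜ b') ⋆ ψ (a' ⊗ₜ b'')) * (1 ⊗ₜ a'') := by
        rw [wreathMul_mul_one_tmul_tmul_one ha]
    _ = (b ⊗ₜ 1) * ((1 ⊗ₜ a) ⋆ ((b' ⊗ₜ 1) * ψ (a' ⊗ₜ b''))) * (1 ⊗ₜ a'') := by
        rw [one_tmul_wreathMul_tmul_one_mul hb]
    _ = (b ⊗ₜ a) ⋆ ((b' ⊗ₜ a') ⋆ (b'' ⊗ₜ a'')) := by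
        rw [wreathMul_tmul_tmul ψ b', tmul_wreathMul ψ b a, wreathMul_mul_right, mul_assoc]

variable {φ : B ⊗[R] A →ₗ[R] A ⊗[R] B}

theorem IsWeakInverse.wreathMul_one (hinv : IsWeakInverse R ψ φ) (x : B ⊗[R] A) :
    x ⋆ 1 = ψ (φ x) := by
  induction x using TensorProduct.induction_on with
  | zero => simp
  | add u v hu hv => simp only [add_tmul, map_add, hu, hv]
  | tmul b a =>
    rw [Algebra.TensorProduct.one_def, wreathMul_tmul_tmul, ← Algebra.TensorProduct.one_def,
      mul_one, hinv.apply_apply_tmul]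

theorem IsWeakInverse.wreathMul_unit
    (ha : ∀ (a a' : A) (b : B), ψ ((a * a') ⊗ₜ b) = (1 ⊗ₜ a) ⋆ ψ (a' ⊗ₜ b))
    (hinv : IsWeakInverse R ψ φ) (x : B ⊗[R] A) : x ⋆ ψ (1 ⊗ₜ 1) = ψ (φ x) := by
  induction x using TensorProduct.induction_on with
  | zero => simp
  | add u v hu hv => simp only [add_tmul, map_add, hu, hv]
  | tmul b a => rw [tmul_wreathMul, ← ha, mul_one, hinv.apply_apply_tmul]

theorem IsWeakInverse.unit_wreathMul (hψ : IsWeakDistLaw R ψ) (hinv : IsWeakInverse R ψ φ)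
    (x : B ⊗[R] A) : ψ (1 ⊗ₜ 1) ⋆ x = ψ (φ x) := by
  induction x using TensorProduct.induction_on with
  | zero => simp
  | add u v hu hv => simp only [tmul_add, map_add, hu, hv]
  | tmul b a =>
    rw [wreathMul_tmul, ← hψ.apply_tmul_mul, one_mul, hψ.apply_one_tmul, hinv.apply_apply_tmul,
      hψ.apply_tmul_one a, mul_assoc]

theorem IsWeakInverse.isIdempotentElem
    (ha : ∀ (a a' : A) (b : B), ψ ((a * a') ⊗ₜ b) = (1 ⊗ₜ a) ⋆ ψ (a' ⊗ₜ b))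
    (hb : ∀ (a : A) (b b' : B), ψ (a ⊗ₜ (b * b')) = ψ (a ⊗ₜ b) ⋆ (b' ⊗ₜ 1))
    (hinv : IsWeakInverse R ψ φ) : IsIdempotentElem (ψ ∘ₗ φ) := by
  have unit_fixed : ψ (φ (ψ (1 ⊗ₜ 1))) = ψ (1 ⊗ₜ 1) := by
    rw [← hinv.wreathMul_one, Algebra.TensorProduct.one_def, ← hb, mul_one]
  refine LinearMap.ext fun x => ?_
  change ψ (φ (ψ (φ x))) = ψ (φ x)
  rw [← hinv.wreathMul_unit ha, ← hinv.wreathMul_unit ha, wreathMul_assoc ha hb,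
    hinv.wreathMul_unit ha, unit_fixed]

theorem IsWeakInverse.wreathMul_mem_range
    (ha : ∀ (a a' : A) (b : B), ψ ((a * a') ⊗ₜ b) = (1 ⊗ₜ a) ⋆ ψ (a' ⊗ₜ b))
    (hb : ∀ (a : A) (b b' : B), ψ (a ⊗ₜ (b * b')) = ψ (a ⊗ₜ b) ⋆ (b' ⊗ₜ 1))
    (hinv : IsWeakInverse R ψ φ) (x : B ⊗[R] A) {y : B ⊗[R] A} (hy : y ∈ range (ψ ∘ₗ φ)) :
    x ⋆ y ∈ range (ψ ∘ₗ φ) := by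
  have hE := hinv.isIdempotentElem ha hb
  rw [hE.mem_range_iff] at hy ⊢
  rw [comp_apply, ← hinv.wreathMul_unit ha, wreathMul_assoc ha hb, hinv.wreathMul_unit ha,
    ← comp_apply, hy]

end WreathProduct

theorem weak_wreath_product_algebra_general
    {R A B : Type*} [CommRing R] [Ring A] [Ring B] [Algebra R A] [Algebra R B]
    (ψ : A ⊗[R] B →ₗ[R] B ⊗[R] A) (φ : B ⊗[R] A →ₗ[R] A ⊗[R] B)
    (hψ : IsWeakDistLaw R ψ) (hinv : IsWeakInverse R ψ φ) :
    -- `ψ ∘ φ` is an idempotent `k`-linear endomorphism of `B ⊗ A`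
    ((ψ ∘ₗ φ) ∘ₗ (ψ ∘ₗ φ) = ψ ∘ₗ φ) ∧
    -- the image of `ψ ∘ φ` is closed under the wreath product multiplication
    (∀ x y : B ⊗[R] A, x ∈ LinearMap.range (ψ ∘ₗ φ) → y ∈ LinearMap.range (ψ ∘ₗ φ) →
      wreathMul R ψ (x ⊗ₜ[R] y) ∈ LinearMap.range (ψ ∘ₗ φ)) ∧
    -- the multiplication is associative on the image
    (∀ x y z : B ⊗[R] A, x ∈ LinearMap.range (ψ ∘ₗ φ) → y ∈ LinearMap.range (ψ ∘ₗ φ) →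
      z ∈ LinearMap.range (ψ ∘ₗ φ) →
      wreathMul R ψ (wreathMul R ψ (x ⊗ₜ[R] y) ⊗ₜ[R] z) =
        wreathMul R ψ (x ⊗ₜ[R] wreathMul R ψ (y ⊗ₜ[R] z))) ∧
    -- `ψ(1 ⊗ 1)` equals `(ψ ∘ φ)(1 ⊗ 1)` (in particular it lies in the image)
    (ψ ((1 : A) ⊗ₜ[R] (1 : B)) = (ψ ∘ₗ φ) ((1 : B) ⊗ₜ[R] (1 : A))) ∧
    -- `ψ(1 ⊗ 1)` is a two-sided unit for the image
    (∀ x ∈ LinearMap.range (ψ ∘ₗ φ),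
      wreathMul R ψ (ψ ((1 : A) ⊗ₜ[R] (1 : B)) ⊗ₜ[R] x) = x ∧
      wreathMul R ψ (x ⊗ₜ[R] ψ ((1 : A) ⊗ₜ[R] (1 : B))) = x) := by
  have ha := hψ.apply_mul_tmul
  have hb := hψ.apply_tmul_mul
  have hE := hinv.isIdempotentElem ha hb
  refine ⟨hE, fun x y _ hy => hinv.wreathMul_mem_range ha hb x hy,
    fun x y z _ _ _ => wreathMul_assoc ha hb x y z, ?_, fun x hx => ⟨?_, ?_⟩⟩
  · rw [comp_apply, hinv.apply_apply_tmul]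
    exact (one_mul _).symm
  · rw [hinv.unit_wreathMul hψ, ← comp_apply, hE.mem_range_iff.mp hx]
  · rw [hinv.wreathMul_unit ha, ← comp_apply, hE.mem_range_iff.mp hx]

/-- the weak wreath product algebra. -/
theorem weak_wreath_product_algebra
    {R A B : Type*} [CommRing R] [Ring A] [Ring B] [Algebra R A] [Algebra R B]
    (ψ : A ⊗[R] B →ₗ[R] B ⊗[R] A) (φ : B ⊗[R] A →ₗ[R] A ⊗[R] B)
    (hψ : IsWeakDistLaw R ψ) (hφ : IsWeakDistLaw R φ) (hinv : IsWeakInverse R ψ φ) :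
    -- `ψ ∘ φ` is an idempotent `k`-linear endomorphism of `B ⊗ A`
    ((ψ ∘ₗ φ) ∘ₗ (ψ ∘ₗ φ) = ψ ∘ₗ φ) ∧
    -- the image of `ψ ∘ φ` is closed under the wreath product multiplication
    (∀ x y : B ⊗[R] A, x ∈ LinearMap.range (ψ ∘ₗ φ) → y ∈ LinearMap.range (ψ ∘ₗ φ) →
      wreathMul R ψ (x ⊗ₜ[R] y) ∈ LinearMap.range (ψ ∘ₗ φ)) ∧
    -- the multiplication is associative on the image
    (∀ x y z : B ⊗[R] A, x ∈ LinearMap.range (ψ ∘ₗ φ) → y ∈ LinearMap.range (ψ ∘ₗ φ) →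
      z ∈ LinearMap.range (ψ ∘ₗ φ) →
      wreathMul R ψ (wreathMul R ψ (x ⊗ₜ[R] y) ⊗ₜ[R] z) =
        wreathMul R ψ (x ⊗ₜ[R] wreathMul R ψ (y ⊗ₜ[R] z))) ∧
    -- `ψ(1 ⊗ 1)` equals `(ψ ∘ φ)(1 ⊗ 1)` (in particular it lies in the image)
    (ψ ((1 : A) ⊗ₜ[R] (1 : B)) = (ψ ∘ₗ φ) ((1 : B) ⊗ₜ[R] (1 : A))) ∧
    -- `ψ(1 ⊗ 1)` is a two-sided unit for the image
    (∀ x ∈ LinearMap.range (ψ ∘ₗ φ),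
      wreathMul R ψ (ψ ((1 : A) ⊗ₜ[R] (1 : B)) ⊗ₜ[R] x) = x ∧
      wreathMul R ψ (x ⊗ₜ[R] ψ ((1 : A) ⊗ₜ[R] (1 : B))) = x) :=
  weak_wreath_product_algebra_general ψ φ hψ hinv
end

section
/- A weak bialgebra A over a commutative ring k is a weak Hopf algebra (i.e. admits an antipode) if and only if there exists a (not necessarily unique) k-linear map Z : A → A such that id_A∗Z = ⊓^L and Z∗id_A = ⊓^R in the convolution algebra of k-linear endomorphisms of A. -/
open TensorProduct LinearMap

/-!
Under convolution, `H →ₗ[R] H` is a semigroup (Mathlib's convolution algebra). Since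
`Δ a = Δ 1 * Δ a` and `ε` is a counit, `⊓^L ∗ id = id`; so `id ∗ Z ∗ id = ⊓^L ∗ id = id`, i.e. `Z`
is an inner inverse of `id`. Then `S = Z ∗ id ∗ Z` is a reflexive inverse of `id`, with
`id ∗ S = id ∗ Z = ⊓^L`, `S ∗ id = Z ∗ id = ⊓^R` and `S ∗ id ∗ S = S`.
-/

theorem reflexive_inverse_of_inner_inverse {M : Type*} [Semigroup M] {x z : M}
    (h : x * z * x = x) :
    x * (z * x * z) = x * z ∧ z * x * z * x = z * x ∧
      z * x * z * x * (z * x * z) = z * x * z := by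
  have hxzx : x * (z * x) = x := by rw [← mul_assoc, h]
  have hxzxw : ∀ w, x * (z * (x * w)) = x * w := fun w => by
    rw [← mul_assoc z, ← mul_assoc x, hxzx]
  simp only [mul_assoc, hxzx, hxzxw, and_self]

open Coalgebra WithConv

section algWBA

variable {R H : Type*} [CommRing R] [Ring H] [Algebra R H] [Coalgebra R H]

theorem algWBA_mul2_tmul (x y : H ⊗[R] H) : (algWBA R H).mul2 (x ⊗ₜ y) = x * y := by
  induction x using TensorProduct.induction_on with
  | zero => simp
  | add x x' hx hx' => simp [TensorProduct.add_tmul, hx, hx', add_mul]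
  | tmul a b =>
    induction y using TensorProduct.induction_on with
    | zero => simp
    | add y y' hy hy' => simp [TensorProduct.tmul_add, hy, hy', mul_add]
    | tmul c e => simp [WBAData.mul2, algWBA]

theorem comul_mul_of_isWeakBialgebra (h : (algWBA R H).IsWeakBialgebra) (a b : H) :
    comul (R := R) (a * b) = comul a * comul b := by
  have := LinearMap.congr_fun h.comul_mul (a ⊗ₜ[R] b)
  simp only [LinearMap.comp_apply, TensorProduct.map_tmul, algWBA_mul2_tmul] at this
  exact this

theorem algWBA_piL_mul (x y : H) :
    (algWBA R H).piL x * y =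
      TensorProduct.lid R H (rTensor H (counit (R := R)) (comul 1 * x ⊗ₜ[R] y)) := by
  simp only [WBAData.piL, algWBA, LinearMap.comp_apply, LinearEquiv.coe_coe, flip_apply,
    TensorProduct.mk_apply]
  induction comul (R := R) (1 : H) using TensorProduct.induction_on with
  | zero => simp
  | add t t' ht ht' => simp [TensorProduct.tmul_add, add_mul, ht, ht']
  | tmul l r => simp

theorem algWBA_conv_piL_id (h : (algWBA R H).IsWeakBialgebra) :
    (algWBA R H).conv (algWBA R H).piL LinearMap.id = LinearMap.id := by
  have hmul : mul' R H ∘ₗ TensorProduct.map (algWBA R H).piL LinearMap.id =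
      (TensorProduct.lid R H).toLinearMap ∘ₗ rTensor H (counit (R := R)) ∘ₗ
        LinearMap.mulLeft R (comul 1) := by
    ext x y
    simp [algWBA_piL_mul]
  ext a
  have := congrArg (fun f => f (comul a)) hmul
  simp only [WBAData.conv, algWBA, LinearMap.comp_apply] at this ⊢
  simp [this, ← comul_mul_of_isWeakBialgebra h]

end algWBA

/-- a weak bialgebra is a weak Hopf algebra iff there is `Z` with
`id ∗ Z = ⊓^L` and `Z ∗ id = ⊓^R`. -/
theorem weak_hopf_iff_exists_Z
    {R H : Type*} [CommRing R] [Ring H] [Algebra R H] [Coalgebra R H]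
    (h : (algWBA R H).IsWeakBialgebra) :
    (∃ S : H →ₗ[R] H, (algWBA R H).IsAntipode S) ↔
    (∃ Z : H →ₗ[R] H,
      (algWBA R H).conv LinearMap.id Z = (algWBA R H).piL ∧
      (algWBA R H).conv Z LinearMap.id = (algWBA R H).piR) := by
  refine ⟨fun ⟨S, hSL, hSR, _⟩ => ⟨S, hSL, hSR⟩, fun ⟨Z, hZL, hZR⟩ => ?_⟩
  -- `(algWBA R H).conv f g` is definitionally `(toConv f * toConv g).ofConv`.
  let x : WithConv (H →ₗ[R] H) := toConv LinearMap.id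
  let z : WithConv (H →ₗ[R] H) := toConv Z
  have hxzx : x * z * x = x := by
    rw [show x * z = toConv (algWBA R H).piL from congrArg toConv hZL]
    exact congrArg toConv (algWBA_conv_piL_id h)
  obtain ⟨hxs, hsx, hsxs⟩ := reflexive_inverse_of_inner_inverse hxzx
  exact ⟨(z * x * z).ofConv, (congrArg ofConv hxs).trans hZL, (congrArg ofConv hsx).trans hZR,
    congrArg ofConv hsxs⟩
end

section
/- Let A be a weak bialgebra over a commutative ring k and Z : A → A a k-linear map with id_A∗Z = ⊓^L and Z∗id_A = ⊓^R. Then the map S := Z∗id_A∗Z satisfies S = ⊓^R∗Z = Z∗⊓^L, id_A∗S = ⊓^L, S∗id_A = ⊓^R, and S∗id_A∗S = S; in particular S is an antipode making A a weak Hopf algebra. -/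
open TensorProduct LinearMap

/-!
Comultiplicativity gives `Δ(1)Δ(a) = Δ(a) = Δ(a)Δ(1)`; applying `ε ⊗ id`, resp. `id ⊗ ε`, this
reads `⊓^L ∗ id = id = id ∗ ⊓^R`. Together with `id ∗ Z = ⊓^L` and `Z ∗ id = ⊓^R`, every claimed
identity for `S = Z ∗ id ∗ Z` then follows from associativity of convolution alone.
-/

section Sandwich

variable {M : Type*} [Semigroup M] {i z l r : M}

theorem mul_sandwich_eq (hl : i * z = l) (hr : z * i = r) (hir : i * r = i) :
    i * (z * i * z) = l := by
  rw [← mul_assoc, ← mul_assoc, mul_assoc i z i, hr, hir, hl]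

theorem sandwich_mul_eq (hl : i * z = l) (hr : z * i = r) (hli : l * i = i) :
    z * i * z * i = r := by
  rw [mul_assoc z i z, hl, mul_assoc, hli, hr]

theorem sandwich_mul_sandwich (hl : i * z = l) (hr : z * i = r) (hli : l * i = i)
    (hir : i * r = i) : z * i * z * i * (z * i * z) = z * i * z := by
  rw [sandwich_mul_eq hl hr hli, ← hr, mul_assoc, mul_sandwich_eq hl hr hir, mul_assoc, hl]

end Sandwich

namespace algWBA

open Coalgebra

variable {R H : Type*} [CommRing R] [Ring H] [Algebra R H] [Coalgebra R H]

theorem mul2_tmul (u v : H ⊗[R] H) : (algWBA R H).mul2 (u ⊗ₜ[R] v) = u * v := by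
  induction u using TensorProduct.induction_on with
  | zero => simp [WBAData.mul2]
  | add x y hx hy => simp_all [add_tmul, add_mul]
  | tmul a b =>
    induction v using TensorProduct.induction_on with
    | zero => simp [WBAData.mul2]
    | add x y hx hy => simp_all [tmul_add, mul_add]
    | tmul c e => simp [WBAData.mul2, algWBA]

theorem comul_mul_apply (h : (algWBA R H).IsWeakBialgebra) (x y : H) :
    comul (R := R) (x * y) = comul (R := R) x * comul (R := R) y := by
  rw [← mul2_tmul]
  simpa [algWBA] using LinearMap.congr_fun h.comul_mul (x ⊗ₜ[R] y)

theorem mul'_rTensor_piL (v : H ⊗[R] H) :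
    mul' R H (rTensor H (algWBA R H).piL v) =
      TensorProduct.lid R H (rTensor H counit (comul (1 : H) * v)) := by
  induction v using TensorProduct.induction_on with
  | zero => simp
  | add x y hx hy => simp_all [mul_add]
  | tmul x y =>
    simp only [WBAData.piL, algWBA]
    induction comul (R := R) (1 : H) using TensorProduct.induction_on with
    | zero => simp
    | add p q hp hq => simp_all [add_mul]
    | tmul p q => simp

theorem mul'_lTensor_piR (v : H ⊗[R] H) :
    mul' R H (lTensor H (algWBA R H).piR v) =
      TensorProduct.rid R H (lTensor H counit (v * comul (1 : H))) := by
  induction v using TensorProduct.induction_on with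
  | zero => simp
  | add x y hx hy => simp_all [add_mul]
  | tmul x y =>
    simp only [WBAData.piR, algWBA]
    induction comul (R := R) (1 : H) using TensorProduct.induction_on with
    | zero => simp
    | add p q hp hq => simp_all [mul_add]
    | tmul p q => simp

variable (h : (algWBA R H).IsWeakBialgebra)
include h

theorem piL_conv_id : (algWBA R H).conv (algWBA R H).piL LinearMap.id = LinearMap.id := by
  ext a
  change mul' R H (rTensor H _ (comul a)) = a
  rw [mul'_rTensor_piL, ← comul_mul_apply h, one_mul, rTensor_counit_comul]
  simp

theorem id_conv_piR : (algWBA R H).conv LinearMap.id (algWBA R H).piR = LinearMap.id := by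
  ext a
  change mul' R H (lTensor H _ (comul a)) = a
  rw [mul'_lTensor_piR, ← comul_mul_apply h, mul_one, lTensor_counit_comul]
  simp

end algWBA

open WithConv in
/-- from `Z` with `id ∗ Z = ⊓^L`, `Z ∗ id = ⊓^R` one constructs the
antipode `S = Z ∗ id ∗ Z`. -/
theorem antipode_from_Z
    {R H : Type*} [CommRing R] [Ring H] [Algebra R H] [Coalgebra R H]
    (h : (algWBA R H).IsWeakBialgebra) (Z : H →ₗ[R] H)
    (hZ1 : (algWBA R H).conv LinearMap.id Z = (algWBA R H).piL)
    (hZ2 : (algWBA R H).conv Z LinearMap.id = (algWBA R H).piR) :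
    let d := algWBA R H
    let S := d.conv (d.conv Z LinearMap.id) Z
    S = d.conv d.piR Z ∧
    S = d.conv Z d.piL ∧
    d.conv LinearMap.id S = d.piL ∧
    d.conv S LinearMap.id = d.piR ∧
    d.conv (d.conv S LinearMap.id) S = S ∧
    d.IsAntipode S := by
  intro d S
  -- `d.conv f g` is definitionally `ofConv (toConv f * toConv g)` in Mathlib's convolution ring.
  have hl : toConv LinearMap.id * toConv Z = toConv d.piL := congrArg toConv hZ1
  have hr : toConv Z * toConv LinearMap.id = toConv d.piR := congrArg toConv hZ2
  have hli : toConv d.piL * toConv LinearMap.id = toConv (LinearMap.id : H →ₗ[R] H) :=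
    congrArg toConv (algWBA.piL_conv_id h)
  have hir : toConv LinearMap.id * toConv d.piR = toConv (LinearMap.id : H →ₗ[R] H) :=
    congrArg toConv (algWBA.id_conv_piR h)
  have hS_left : S = d.conv d.piR Z := by rw [← hZ2]
  have hS_right : S = d.conv Z d.piL := congrArg ofConv
    (show toConv Z * toConv LinearMap.id * toConv Z = toConv Z * toConv d.piL by rw [mul_assoc, hl])
  have hid_S : d.conv LinearMap.id S = d.piL := congrArg ofConv (mul_sandwich_eq hl hr hir)
  have hS_id : d.conv S LinearMap.id = d.piR := congrArg ofConv (sandwich_mul_eq hl hr hli)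
  have hS_id_S : d.conv (d.conv S LinearMap.id) S = S :=
    congrArg ofConv (sandwich_mul_sandwich hl hr hli hir)
  exact ⟨hS_left, hS_right, hid_S, hS_id, hS_id_S, hid_S, hS_id, hS_id_S⟩
end

section
/- Let ψ : A⊗B → B⊗A be a weak distributive law between k-algebras A and B, and let φ : B⊗A → A⊗B be a weak inverse of ψ. Then ψ∘φ∘ψ = ψ and φ∘ψ∘φ = φ; in particular the maps ψ∘φ and φ∘ψ are idempotent. -/
open TensorProduct LinearMap

/-!
Write `∇ψ` for the map `b ⊗ a ↦ b · ψ(a ⊗ 1)` of `B ⊗ A`. The first weak-inverse condition says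
exactly `ψ ∘ φ = ∇ψ`, and the multiplicativity of `ψ` in its second argument, taken at `b' = 1`,
says `ψ(a ⊗ b) = ψ(a ⊗ b · 1) = ∇ψ (ψ(a ⊗ b))`. Hence `ψ ∘ φ ∘ ψ = ∇ψ ∘ ψ = ψ`. The definition of a
weak inverse is symmetric in `ψ` and `φ`, so also `φ ∘ ψ ∘ φ = φ`, and idempotency of the two
composites follows by reassociating.
-/

section WeakInverse

variable {R A B : Type*} [CommRing R] [Ring A] [Ring B] [Algebra R A] [Algebra R B]

noncomputable def mulTwistOne (ψ : A ⊗[R] B →ₗ[R] B ⊗[R] A) : B ⊗[R] A →ₗ[R] B ⊗[R] A :=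
  rTensor A (mul' R B) ∘ₗ (TensorProduct.assoc R B B A).symm.toLinearMap
    ∘ₗ lTensor B (ψ ∘ₗ (TensorProduct.mk R A B).flip 1)

theorem mulTwistOne_apply (ψ : A ⊗[R] B →ₗ[R] B ⊗[R] A) (x : B ⊗[R] A) :
    mulTwistOne ψ x = rTensor A (mul' R B) ((TensorProduct.assoc R B B A).symm
      (lTensor B ψ (TensorProduct.assoc R B A B (x ⊗ₜ[R] 1)))) := by
  induction x using TensorProduct.induction_on with
  | zero => simp
  | tmul b a => rfl
  | add x y hx hy => simp only [map_add, hx, hy, TensorProduct.add_tmul]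

theorem IsWeakDistLaw.mulTwistOne_comp {ψ : A ⊗[R] B →ₗ[R] B ⊗[R] A}
    (hψ : IsWeakDistLaw R ψ) : mulTwistOne ψ ∘ₗ ψ = ψ :=
  TensorProduct.ext' fun a b => by
    simpa only [mul_one, comp_apply, ← mulTwistOne_apply] using (hψ.2.1 a b 1).symm

theorem IsWeakInverse.comp_eq_mulTwistOne {ψ : A ⊗[R] B →ₗ[R] B ⊗[R] A}
    {φ : B ⊗[R] A →ₗ[R] A ⊗[R] B} (hinv : IsWeakInverse R ψ φ) : ψ ∘ₗ φ = mulTwistOne ψ :=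
  TensorProduct.ext' fun b a => hinv.1 a b

theorem IsWeakInverse.symm {ψ : A ⊗[R] B →ₗ[R] B ⊗[R] A} {φ : B ⊗[R] A →ₗ[R] A ⊗[R] B}
    (hinv : IsWeakInverse R ψ φ) : IsWeakInverse R φ ψ :=
  ⟨fun b a => hinv.2 a b, fun b a => hinv.1 a b⟩

theorem IsWeakInverse.comp_comp_self {ψ : A ⊗[R] B →ₗ[R] B ⊗[R] A}
    {φ : B ⊗[R] A →ₗ[R] A ⊗[R] B} (hψ : IsWeakDistLaw R ψ) (hinv : IsWeakInverse R ψ φ) :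
    ψ ∘ₗ φ ∘ₗ ψ = ψ := by
  rw [← comp_assoc, hinv.comp_eq_mulTwistOne, hψ.mulTwistOne_comp]

end WeakInverse

theorem LinearMap.comp_idempotent_of_comp_comp_self {R M N : Type*} [Semiring R]
    [AddCommMonoid M] [AddCommMonoid N] [Module R M] [Module R N] {f : M →ₗ[R] N}
    {g : N →ₗ[R] M} (h : f ∘ₗ g ∘ₗ f = f) : (f ∘ₗ g) ∘ₗ (f ∘ₗ g) = f ∘ₗ g := by
  rw [comp_assoc, ← comp_assoc g, ← comp_assoc, h]

/-- `ψφψ = ψ`, `φψφ = φ`, and the composites are idempotent. -/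
theorem weak_inverse_idempotents
    {R A B : Type*} [CommRing R] [Ring A] [Ring B] [Algebra R A] [Algebra R B]
    (ψ : A ⊗[R] B →ₗ[R] B ⊗[R] A) (φ : B ⊗[R] A →ₗ[R] A ⊗[R] B)
    (hψ : IsWeakDistLaw R ψ) (hφ : IsWeakDistLaw R φ) (hinv : IsWeakInverse R ψ φ) :
    (ψ ∘ₗ φ ∘ₗ ψ = ψ) ∧ (φ ∘ₗ ψ ∘ₗ φ = φ) ∧
    ((ψ ∘ₗ φ) ∘ₗ (ψ ∘ₗ φ) = ψ ∘ₗ φ) ∧ ((φ ∘ₗ ψ) ∘ₗ (φ ∘ₗ ψ) = φ ∘ₗ ψ) := by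
  have hψφψ : ψ ∘ₗ φ ∘ₗ ψ = ψ := hinv.comp_comp_self hψ
  have hφψφ : φ ∘ₗ ψ ∘ₗ φ = φ := hinv.symm.comp_comp_self hφ
  exact ⟨hψφψ, hφψφ, comp_idempotent_of_comp_comp_self hψφψ,
    comp_idempotent_of_comp_comp_self hφψφ⟩
end

section
/- Let A and B be k-algebras that also carry k-coalgebra structures, and let (ψ,φ) be a weakly comonoidal mutually weak inverse pair of weak distributive laws ψ : A⊗B → B⊗A and φ : B⊗A → A⊗B. Then ((ψ∘φ)⊗(ψ∘φ))∘Δ_{B⊗A}∘(ψ∘φ) = ((ψ∘φ)⊗(ψ∘φ))∘Δ_{B⊗A}; that is, the projection ψ∘φ onto the weak wreath product is comultiplicative. -/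
open TensorProduct LinearMap

/-! By the weak inverse axiom, `ψ ∘ φ` is `b ⊗ a ↦ b · ψ(a ⊗ 1)`, which fixes the image of `ψ`
by axiom (b) with `b' = 1`; hence `ψ ∘ φ ∘ ψ = ψ`. Using this, the second and fourth weakly
comonoidal identities rewrite both sides of the claim to `(ψ ⊗ ψ) ∘ Δ_{A⊗B} ∘ φ`. -/

section WeakWreathProjection

variable {R A B : Type*} [CommRing R] [Ring A] [Ring B] [Algebra R A] [Algebra R B]

/-- `b ⊗ a ↦ b · ψ(a ⊗ 1)`. -/
noncomputable def wreathProjection (ψ : A ⊗[R] B →ₗ[R] B ⊗[R] A) :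
    B ⊗[R] A →ₗ[R] B ⊗[R] A :=
  rTensor A (mul' R B) ∘ₗ (TensorProduct.assoc R B B A).symm.toLinearMap ∘ₗ lTensor B ψ
    ∘ₗ (TensorProduct.assoc R B A B).toLinearMap ∘ₗ (TensorProduct.mk R (B ⊗[R] A) B).flip 1

theorem IsWeakInverse.comp_eq_wreathProjection {ψ : A ⊗[R] B →ₗ[R] B ⊗[R] A}
    {φ : B ⊗[R] A →ₗ[R] A ⊗[R] B} (hinv : IsWeakInverse R ψ φ) :
    ψ ∘ₗ φ = wreathProjection ψ :=
  TensorProduct.ext' fun b a => by simpa [wreathProjection] using hinv.1 a b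

theorem IsWeakDistLaw.wreathProjection_comp {ψ : A ⊗[R] B →ₗ[R] B ⊗[R] A}
    (hψ : IsWeakDistLaw R ψ) : wreathProjection ψ ∘ₗ ψ = ψ :=
  TensorProduct.ext' fun a b => by simpa [wreathProjection] using (hψ.2.1 a b 1).symm

end WeakWreathProjection

theorem map_comp_comul_comp_comp_eq {R M N : Type*} [CommRing R] [AddCommGroup M]
    [AddCommGroup N] [Module R M] [Module R N] {ψ : M →ₗ[R] N} {φ : N →ₗ[R] M}
    {ΔM : M →ₗ[R] M ⊗[R] M} {ΔN : N →ₗ[R] N ⊗[R] N} (hψφψ : ψ ∘ₗ φ ∘ₗ ψ = ψ)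
    (hψ : lTensor N (ψ ∘ₗ φ) ∘ₗ ΔN ∘ₗ ψ = map ψ ψ ∘ₗ ΔM)
    (hφ : lTensor M (φ ∘ₗ ψ) ∘ₗ ΔM ∘ₗ φ = map φ φ ∘ₗ ΔN) :
    map (ψ ∘ₗ φ) (ψ ∘ₗ φ) ∘ₗ ΔN ∘ₗ (ψ ∘ₗ φ) = map (ψ ∘ₗ φ) (ψ ∘ₗ φ) ∘ₗ ΔN := by
  have hψφψ' : (ψ ∘ₗ φ) ∘ₗ ψ = ψ := by rw [comp_assoc, hψφψ]
  calc map (ψ ∘ₗ φ) (ψ ∘ₗ φ) ∘ₗ ΔN ∘ₗ (ψ ∘ₗ φ)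
      = (rTensor N (ψ ∘ₗ φ) ∘ₗ (lTensor N (ψ ∘ₗ φ) ∘ₗ ΔN ∘ₗ ψ)) ∘ₗ φ := by
        rw [← rTensor_comp_lTensor]; rfl
    _ = (map ψ ψ ∘ₗ ΔM) ∘ₗ φ := by
        rw [hψ, ← comp_assoc, rTensor_comp_map, hψφψ']
    _ = map ψ ψ ∘ₗ (lTensor M (φ ∘ₗ ψ) ∘ₗ ΔM ∘ₗ φ) := by
        rw [← comp_assoc, ← comp_assoc, map_comp_lTensor, hψφψ]
    _ = map (ψ ∘ₗ φ) (ψ ∘ₗ φ) ∘ₗ ΔN := by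
        rw [hφ, ← comp_assoc, map_comp]

theorem weak_wreath_projection_comultiplicative_general
    {R A B : Type*} [CommRing R] [Ring A] [Ring B] [Algebra R A] [Algebra R B]
    [Coalgebra R A] [Coalgebra R B]
    (ψ : A ⊗[R] B →ₗ[R] B ⊗[R] A) (φ : B ⊗[R] A →ₗ[R] A ⊗[R] B)
    (hψ : IsWeakDistLaw R ψ) (hinv : IsWeakInverse R ψ φ)
    (hcom : IsWeaklyComonoidal R ψ φ) :
    TensorProduct.map (ψ ∘ₗ φ) (ψ ∘ₗ φ) ∘ₗ comulTP R (A := B) (B := A) ∘ₗ (ψ ∘ₗ φ) =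
      TensorProduct.map (ψ ∘ₗ φ) (ψ ∘ₗ φ) ∘ₗ comulTP R (A := B) (B := A) :=
  map_comp_comul_comp_comp_eq (hinv.comp_comp_self hψ) hcom.2.1 hcom.2.2.2.1

/-- the projection `ψ ∘ φ` is comultiplicative. -/
theorem weak_wreath_projection_comultiplicative
    {R A B : Type*} [CommRing R] [Ring A] [Ring B] [Algebra R A] [Algebra R B]
    [Coalgebra R A] [Coalgebra R B]
    (ψ : A ⊗[R] B →ₗ[R] B ⊗[R] A) (φ : B ⊗[R] A →ₗ[R] A ⊗[R] B)
    (hψ : IsWeakDistLaw R ψ) (hφ : IsWeakDistLaw R φ) (hinv : IsWeakInverse R ψ φ)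
    (hcom : IsWeaklyComonoidal R ψ φ) :
    TensorProduct.map (ψ ∘ₗ φ) (ψ ∘ₗ φ) ∘ₗ comulTP R (A := B) (B := A) ∘ₗ (ψ ∘ₗ φ) =
      TensorProduct.map (ψ ∘ₗ φ) (ψ ∘ₗ φ) ∘ₗ comulTP R (A := B) (B := A) :=
  weak_wreath_projection_comultiplicative_general ψ φ hψ hinv hcom
end

section
/- Let A be a bialgebra over a commutative ring k and let e ∈ A be a grouplike element (Δ(e)=e⊗e, ε(e)=1) such that e·a = e·a·e for all a ∈ A. Then the k-linear map ψ : A⊗k → k⊗A determined by a⊗1 ↦ 1⊗e·a is a weak distributive law between the k-algebras A and k (with k its one-dimensional k-algebra), and ψ is a homomorphism of k-coalgebras from the tensor product coalgebra A⊗k to the tensor product coalgebra k⊗A, where k carries its canonical coalgebra structure (Δ_k(1)=1⊗1, ε_k=id_k). -/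
open TensorProduct LinearMap

/-! Left multiplication by a grouplike element is a coalgebra endomorphism, so `ψ`, the composite
`A ⊗ k ≅ A → A ≅ k ⊗ A` of it with the unit isomorphisms, is a coalgebra map. The algebraic
axioms of a weak distributive law reduce to `e * e = e` and to the multiplicativity of
`a ↦ e * a`, which is where `e * a = e * a * e` enters: `e * (a * b) = (e * a * e) * b`. -/

namespace IsGroupLikeElem

variable {R A : Type*} [CommRing R] [Ring A] [Bialgebra R A] {e : A}

noncomputable def mulLeftCoalgHom (he : IsGroupLikeElem R e) : A →ₗc[R] A where
  toLinearMap := LinearMap.mulLeft R e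
  counit_comp := by
    ext a
    simp [Bialgebra.counit_mul, he.counit_eq_one]
  map_comp_comul := by
    ext a
    simp [← LinearMap.mulLeft_tmul, ← he.comul_eq_tmul_self, Bialgebra.comul_mul]

end IsGroupLikeElem

section TensorCoalgebra

variable {R A B : Type*} [CommRing R]

lemma lid_symm_eq_comul_self : ((TensorProduct.lid R R).symm : R →ₗ[R] R ⊗[R] R) =
    Coalgebra.comul := by
  ext; rfl

lemma id_eq_counit_self : (LinearMap.id : R →ₗ[R] R) = Coalgebra.counit := rfl

variable [AddCommGroup A] [Module R A] [Coalgebra R A]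
  [AddCommGroup B] [Module R B] [Coalgebra R B]

lemma comulD_comul_comul : comulD R (Coalgebra.comul (A := A)) (Coalgebra.comul (A := B)) =
    Coalgebra.comul (R := R) (A := A ⊗[R] B) := by
  ext a b
  rfl

lemma counitD_counit_counit :
    counitD R (Coalgebra.counit (A := A)) (Coalgebra.counit (A := B)) =
      Coalgebra.counit (R := R) (A := A ⊗[R] B) := by
  ext a b
  simp [counitD, mul_comm]

end TensorCoalgebra

lemma mul_mul_eq_mul_mul_mul {M : Type*} [Semigroup M] {e : M}
    (he : ∀ a : M, e * a = e * a * e) (a b : M) : e * (a * b) = e * a * (e * b) := by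
  rw [← mul_assoc (e * a) e b, ← he a, mul_assoc]

section MulLeftTwist

variable {R A : Type*} [CommRing R] [Ring A] [Algebra R A]

noncomputable def mulLeftTwist (e : A) : A ⊗[R] R →ₗ[R] R ⊗[R] A :=
  (TensorProduct.lid R A).symm.toLinearMap ∘ₗ LinearMap.mulLeft R e ∘ₗ
    (TensorProduct.rid R A).toLinearMap

@[simp]
lemma mulLeftTwist_tmul (e a : A) (r : R) :
    mulLeftTwist e (a ⊗ₜ[R] r) = r ⊗ₜ[R] (e * a) := by
  simp [mulLeftTwist, TensorProduct.smul_tmul']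

lemma isWeakDistLaw_mulLeftTwist {e : A} (he : ∀ a : A, e * a = e * a * e) :
    IsWeakDistLaw R (mulLeftTwist (R := R) e) := by
  have he_idem : e * e = e := by simpa using (he 1).symm
  refine ⟨fun a a' b => ?_, fun a b b' => ?_, fun b => ?_, fun a => ?_⟩
  · simp [mul_mul_eq_mul_mul_mul he]
  · simp [← mul_assoc, he_idem]
  · simp
  · simp

end MulLeftTwist

section MulLeftTwistCoalgHom

variable {R A : Type*} [CommRing R] [Ring A] [Bialgebra R A] {e : A}

lemma mulLeftTwist_eq_coalgHom (he : IsGroupLikeElem R e) :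
    mulLeftTwist (R := R) e = ((Coalgebra.TensorProduct.lid R A).symm.toCoalgHom.comp
      (he.mulLeftCoalgHom.comp (Coalgebra.TensorProduct.rid R R A).toCoalgHom) :
        A ⊗[R] R →ₗ[R] R ⊗[R] A) := by
  ext a
  simp [mulLeftTwist, IsGroupLikeElem.mulLeftCoalgHom]

lemma comulD_comp_mulLeftTwist (he : IsGroupLikeElem R e) :
    comulD R (TensorProduct.lid R R).symm.toLinearMap Coalgebra.comul ∘ₗ mulLeftTwist e =
      TensorProduct.map (mulLeftTwist e) (mulLeftTwist e) ∘ₗ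
        comulD R Coalgebra.comul (TensorProduct.lid R R).symm.toLinearMap := by
  rw [lid_symm_eq_comul_self, comulD_comul_comul, comulD_comul_comul,
    mulLeftTwist_eq_coalgHom he]
  exact (CoalgHomClass.map_comp_comul _).symm

lemma counitD_comp_mulLeftTwist (he : IsGroupLikeElem R e) :
    counitD R LinearMap.id Coalgebra.counit ∘ₗ mulLeftTwist e =
      counitD R Coalgebra.counit (LinearMap.id : R →ₗ[R] R) := by
  rw [id_eq_counit_self, counitD_counit_counit, counitD_counit_counit,
    mulLeftTwist_eq_coalgHom he]
  exact CoalgHomClass.counit_comp _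

end MulLeftTwistCoalgHom

/-- for a grouplike `e` with `ea = eae`, the map `a ⊗ 1 ↦ 1 ⊗ ea` is a
weak distributive law `A ⊗ k → k ⊗ A` which is a homomorphism of coalgebras. -/
theorem grouplike_weak_dist_law
    {R A : Type*} [CommRing R] [Ring A] [Bialgebra R A]
    (e : A) (he1 : Coalgebra.comul (R := R) e = e ⊗ₜ[R] e)
    (he2 : Coalgebra.counit (R := R) e = (1 : R))
    (he3 : ∀ a : A, e * a = e * a * e) :
    let ψ : A ⊗[R] R →ₗ[R] R ⊗[R] A :=
      (TensorProduct.lid R A).symm.toLinearMap ∘ₗ LinearMap.mulLeft R e ∘ₗ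
        (TensorProduct.rid R A).toLinearMap
    -- the canonical comultiplication and counit of `k`
    let dR : R →ₗ[R] R ⊗[R] R := (TensorProduct.lid R R).symm.toLinearMap
    let eR : R →ₗ[R] R := LinearMap.id
    -- `ψ` is a weak distributive law between the algebras `A` and `k`
    IsWeakDistLaw R ψ ∧
    -- `ψ` is comultiplicative with respect to the tensor product comultiplications
    (comulD R dR (Coalgebra.comul (R := R) (A := A)) ∘ₗ ψ =
      TensorProduct.map ψ ψ ∘ₗ comulD R (Coalgebra.comul (R := R) (A := A)) dR) ∧
    -- `ψ` is counital with respect to the tensor product counits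
    (counitD R eR (Coalgebra.counit (R := R) (A := A)) ∘ₗ ψ =
      counitD R (Coalgebra.counit (R := R) (A := A)) eR) := by
  have he : IsGroupLikeElem R e := ⟨he2, he1⟩
  exact ⟨isWeakDistLaw_mulLeftTwist he3, comulD_comp_mulLeftTwist he,
    counitD_comp_mulLeftTwist he⟩
end
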